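/- Suppose matrices $\boldsymbol{\alpha}, \boldsymbol{\beta}, \boldsymbol{s}, C$ and invertible diagonal matrix $\gamma^{2\mathcal{N}}$ satisfy $(\boldsymbol{\alpha} C + \boldsymbol{s})\gamma^{-2\mathcal{N}} = \overline{\boldsymbol{\alpha}} - \sigma\overline{\boldsymbol{\beta}} + \sigma\boldsymbol{\beta} C\gamma^{-2\mathcal{N}}$ with $\sigma = \sigma_c/\sigma_m \neq 0$, together with its complex conjugate, and assume $I - \overline{C}\gamma^{-2\mathcal{N}}C\gamma^{-2\mathcal{N}}$ is invertible. Then $\sigma_c\overline{\boldsymbol{\beta}}(I - \overline{C}\gamma^{-2\mathcal{N}}C\gamma^{-2\mathcal{N}}) = \sigma_m\overline{\boldsymbol{\alpha}}(I - \overline{C}\gamma^{-2\mathcal{N}}C\gamma^{-2\mathcal{N}}) - \sigma_m\boldsymbol{s}\gamma^{-2\mathcal{N}} - \sigma_m\overline{\boldsymbol{s}}\gamma^{-2\mathcal{N}}C\gamma^{-2\mathcal{N}}$. -/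
import Mathlib


open Matrix

/-- derivation of the formula for conj(𝜷) from equation (4.2)
and its conjugate, with G = γ^{-2𝒩} real diagonal. -/
theorem beta_formula (K : ℕ) (γ σc σm : ℝ)
    (hγ : 0 < γ) (hσm : σm ≠ 0) (hσ : σc / σm ≠ 0)
    (α β s C G : Matrix (Fin K) (Fin K) ℂ)
    (hG : G = Matrix.diagonal fun n : Fin K => (γ : ℂ) ^ (-(2 * (((n : ℕ) : ℤ) + 1))))
    (hinv : IsUnit (1 - C.map (starRingEnd ℂ) * G * C * G))
    (heq : (σm : ℂ) • ((α * C + s) * G)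
        = (σm : ℂ) • α.map (starRingEnd ℂ) - (σc : ℂ) • β.map (starRingEnd ℂ)
          + (σc : ℂ) • (β * C * G))
    (heq' : (σm : ℂ) • ((α.map (starRingEnd ℂ) * C.map (starRingEnd ℂ)
          + s.map (starRingEnd ℂ)) * G)
        = (σm : ℂ) • α - (σc : ℂ) • β
          + (σc : ℂ) • (β.map (starRingEnd ℂ) * C.map (starRingEnd ℂ) * G)) :
    (σc : ℂ) • (β.map (starRingEnd ℂ) * (1 - C.map (starRingEnd ℂ) * G * C * G))
      = (σm : ℂ) • (α.map (starRingEnd ℂ) * (1 - C.map (starRingEnd ℂ) * G * C * G))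
        - (σm : ℂ) • (s * G)
        - (σm : ℂ) • (s.map (starRingEnd ℂ) * G * C * G) := by
  have h2 := congrArg (fun X => X * (C * G)) heq'
  simp only [add_mul, sub_mul, mul_sub, mul_one, smul_mul_assoc, mul_assoc] at h2 heq ⊢
  linear_combination (norm := module) heq + h2
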